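/- Let K_X and K_Y be real symmetric positive semidefinite M×M matrices with K_X ≠ K_Y, α = Tr K_X, β = Tr K_Y, and participation ratio R_Δ = R(K_X − K_Y) = ‖K_X − K_Y‖_*²/‖K_X − K_Y‖_F². Then the squared Bures distance satisfies d_B(K_X, K_Y)² ≥ (α + β) − √((α + β)² − R_Δ ‖K_X − K_Y‖_F²), where d_B(K_X, K_Y)² = Tr K_X + Tr K_Y − 2 Tr[(K_X^{1/2} K_Y K_X^{1/2})^{1/2}]. -/

import Mathlib

/-!
Put `S = K_X^{1/2}` and use the polar decomposition of `K_Y^{1/2} K_X^{1/2}` to write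
`K_Y = Q Qᵀ` with `Tr(Sᵀ Q) = F`; then `‖S ± Q‖_F² = α + β ± 2F`. Pick an orthogonal `U` with
`Tr((K_X - K_Y) U) = ‖K_X - K_Y‖_*`. Since `2 (S Sᵀ - Q Qᵀ) = (S + Q)(S - Q)ᵀ + (S - Q)(S + Q)ᵀ`,
Cauchy–Schwarz gives `‖K_X - K_Y‖_*² ≤ ‖S + Q‖_F² ‖S - Q‖_F² = (α + β)² - 4F²`, which is the
claim after solving for `2F`.
-/

open Matrix

/-- The nuclear norm (sum of singular values) of a real matrix, where the singular values are
the square roots of the eigenvalues of `Aᵀ A`. -/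
noncomputable def nuclearNorm {m n : Type*} [Fintype m] [Fintype n] [DecidableEq n]
    (A : Matrix m n ℝ) : ℝ :=
  ∑ i, Real.sqrt ((Matrix.isHermitian_conjTranspose_mul_self A).eigenvalues i)

/-- The squared Frobenius norm of a real matrix. -/
def frobSq {m n : Type*} [Fintype m] [Fintype n] (A : Matrix m n ℝ) : ℝ :=
  ∑ i, ∑ j, A i j ^ 2

namespace Matrix.PosSemidef

open scoped ComplexOrder

/-- The square root of a positive semidefinite matrix (as in the older Mathlib). -/
noncomputable def sqrt {n 𝕜 : Type*} [Fintype n] [DecidableEq n] [RCLike 𝕜] {A : Matrix n n 𝕜}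
    (hA : A.PosSemidef) : Matrix n n 𝕜 :=
  hA.1.eigenvectorUnitary.1 * diagonal ((↑) ∘ (√·) ∘ hA.1.eigenvalues) *
    (star hA.1.eigenvectorUnitary : Matrix n n 𝕜)

lemma posSemidef_sqrt {n 𝕜 : Type*} [Fintype n] [DecidableEq n] [RCLike 𝕜] {A : Matrix n n 𝕜}
    (hA : A.PosSemidef) : PosSemidef hA.sqrt := by
  apply PosSemidef.mul_mul_conjTranspose_same
  refine posSemidef_diagonal_iff.mpr fun i ↦ ?_
  rw [Function.comp_apply, RCLike.nonneg_iff]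
  constructor
  · simp only [Function.comp_apply, RCLike.ofReal_re]; exact Real.sqrt_nonneg _
  · simp only [Function.comp_apply, RCLike.ofReal_im]

end Matrix.PosSemidef

lemma sqrt_mul_mul_sqrt_posSemidef {M : ℕ} {KX KY : Matrix (Fin M) (Fin M) ℝ}
    (hX : KX.PosSemidef) (hY : KY.PosSemidef) :
    (hX.sqrt * KY * hX.sqrt).PosSemidef := by
  have h := hY.mul_mul_conjTranspose_same hX.sqrt
  rwa [hX.posSemidef_sqrt.isHermitian.eq] at h

/-- The fidelity `F(K_X, K_Y) = Tr[(K_X^{1/2} K_Y K_X^{1/2})^{1/2}]` between positive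
semidefinite matrices. -/
noncomputable def fidelity {M : ℕ} {KX KY : Matrix (Fin M) (Fin M) ℝ}
    (hX : KX.PosSemidef) (hY : KY.PosSemidef) : ℝ :=
  (sqrt_mul_mul_sqrt_posSemidef hX hY).sqrt.trace

namespace Matrix.PosSemidef

variable {n : Type*} [Fintype n] [DecidableEq n] {A : Matrix n n ℝ}

theorem sqrt_eq_cfc (hA : A.PosSemidef) : hA.sqrt = cfc Real.sqrt A := by
  rw [hA.1.cfc_eq]; rfl

open scoped MatrixOrder in
theorem sqrt_mul_self (hA : A.PosSemidef) : hA.sqrt * hA.sqrt = A := by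
  have hA' : 0 ≤ A := nonneg_iff_posSemidef.mpr hA
  calc hA.sqrt * hA.sqrt = cfc (fun x ↦ √x * √x) A := by rw [sqrt_eq_cfc, cfc_mul ..]
    _ = cfc id A := cfc_congr fun x hx ↦ Real.mul_self_sqrt (spectrum_nonneg_of_nonneg hA' hx)
    _ = A := cfc_id ℝ A

theorem transpose_sqrt (hA : A.PosSemidef) : hA.sqrtᵀ = hA.sqrt := by
  rw [← conjTranspose_eq_transpose_of_trivial, hA.posSemidef_sqrt.isHermitian.eq]

theorem trace_sqrt (hA : A.PosSemidef) : hA.sqrt.trace = ∑ i, √(hA.1.eigenvalues i) := by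
  rw [sqrt, trace_mul_cycle]
  simp

end Matrix.PosSemidef

theorem nuclearNorm_eq_trace_sqrt {n : Type*} [Fintype n] [DecidableEq n] {A P : Matrix n n ℝ}
    (hP : P.PosSemidef) (hAP : Aᴴ * A = P) : nuclearNorm A = hP.sqrt.trace := by
  subst hAP
  rw [hP.trace_sqrt]
  rfl

theorem nuclearNorm_nonneg {m n : Type*} [Fintype m] [Fintype n] [DecidableEq n]
    (A : Matrix m n ℝ) : 0 ≤ nuclearNorm A :=
  Finset.sum_nonneg fun _ _ ↦ Real.sqrt_nonneg _

open Module in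
theorem exists_orthonormalBasis_smul_eq {𝕜 ι E : Type*} [RCLike 𝕜] [Fintype ι]
    [NormedAddCommGroup E] [InnerProductSpace 𝕜 E] [FiniteDimensional 𝕜 E]
    (hcard : finrank 𝕜 E = Fintype.card ι) {w : ι → E}
    (hw : Pairwise fun i j ↦ inner 𝕜 (w i) (w j) = 0) :
    ∃ b : OrthonormalBasis ι 𝕜 E, ∀ i, w i = (‖w i‖ : 𝕜) • b i := by
  set s : Set ι := {i | w i ≠ 0}
  have hu : Orthonormal 𝕜 (s.domRestrict fun i ↦ (‖w i‖⁻¹ : 𝕜) • w i) := by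
    refine ⟨fun ⟨i, hi⟩ ↦ ?_, fun ⟨i, _⟩ ⟨j, _⟩ hij ↦ ?_⟩
    · simp [norm_smul, inv_mul_cancel₀ (norm_ne_zero_iff.mpr hi)]
    · simp [inner_smul_left, inner_smul_right, hw (Subtype.coe_injective.ne hij)]
  obtain ⟨b, hb⟩ := hu.exists_orthonormalBasis_extension_of_card_eq hcard
  refine ⟨b, fun i ↦ ?_⟩
  by_cases hi : w i = 0
  · simp [hi]
  · rw [hb i hi, smul_smul, mul_inv_cancel₀ (by simpa using hi), one_smul]

theorem dotProduct_mulVec_mulVec {m n R : Type*} [Fintype m] [Fintype n] [CommSemiring R]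
    (A : Matrix m n R) (x y : n → R) : (A *ᵥ x) ⬝ᵥ (A *ᵥ y) = x ⬝ᵥ ((Aᵀ * A) *ᵥ y) := by
  rw [dotProduct_mulVec, ← vecMul_transpose, vecMul_vecMul, ← dotProduct_mulVec]

section SVD

variable {n : Type*} [Fintype n] [DecidableEq n]

theorem exists_mul_eigenvectorUnitary_eq (A : Matrix n n ℝ) :
    ∃ W ∈ unitaryGroup n ℝ,
      A * (isHermitian_conjTranspose_mul_self A).eigenvectorUnitary =
        W * diagonal fun i ↦ √((isHermitian_conjTranspose_mul_self A).eigenvalues i) := by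
  set h := isHermitian_conjTranspose_mul_self A
  set v := h.eigenvectorBasis
  set w : n → EuclideanSpace ℝ n := fun i ↦ WithLp.toLp 2 (A *ᵥ v i)
  have hw : ∀ i j, inner ℝ (w i) (w j) = h.eigenvalues j * inner ℝ (v i) (v j) := by
    intro i j
    have hv : (Aᵀ * A) *ᵥ v j = h.eigenvalues j • v j := h.mulVec_eigenvectorBasis j
    rw [EuclideanSpace.inner_eq_star_dotProduct, EuclideanSpace.inner_eq_star_dotProduct]
    simp only [w, star_trivial]
    rw [dotProduct_comm, dotProduct_mulVec_mulVec, hv, dotProduct_smul, smul_eq_mul,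
      dotProduct_comm]
  obtain ⟨b, hb⟩ := exists_orthonormalBasis_smul_eq finrank_euclideanSpace
    (w := w) fun i j hij ↦ by simp [hw, v, hij]
  have hnorm : ∀ i, ‖w i‖ = √(h.eigenvalues i) := by
    intro i
    rw [norm_eq_sqrt_real_inner, hw, real_inner_self_eq_norm_sq, v.orthonormal.1 i]
    simp
  refine ⟨(EuclideanSpace.basisFun n ℝ).toBasis.toMatrix b.toBasis,
    (EuclideanSpace.basisFun n ℝ).toMatrix_orthonormalBasis_mem_unitary b, ?_⟩
  ext k j
  have := congrArg (· k) (hb j)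
  simp only [w, hnorm] at this
  rw [mul_diagonal, mul_apply]
  simpa [Module.Basis.toMatrix_apply, mulVec, dotProduct, v, mul_comm] using this

theorem transpose_mul_self_eq_one_of_mem_unitaryGroup {U : Matrix n n ℝ}
    (hU : U ∈ unitaryGroup n ℝ) : Uᵀ * U = 1 := by
  simpa [star_eq_conjTranspose, conjTranspose_eq_transpose_of_trivial] using
    mem_unitaryGroup_iff'.mp hU

theorem exists_trace_transpose_mul_eq_nuclearNorm (A : Matrix n n ℝ) :
    ∃ U : Matrix n n ℝ, Uᵀ * U = 1 ∧ (Aᵀ * U).trace = nuclearNorm A := by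
  set h := isHermitian_conjTranspose_mul_self A
  obtain ⟨W, hW, hAV⟩ := exists_mul_eigenvectorUnitary_eq A
  set V : Matrix n n ℝ := h.eigenvectorUnitary.1
  have hWW : Wᵀ * W = 1 := transpose_mul_self_eq_one_of_mem_unitaryGroup hW
  have hVV : V * Vᵀ = 1 := mul_eq_one_comm.mp
    (transpose_mul_self_eq_one_of_mem_unitaryGroup h.eigenvectorUnitary.2)
  refine ⟨W * Vᵀ, ?_, ?_⟩
  · rw [transpose_mul, transpose_transpose, Matrix.mul_assoc, ← Matrix.mul_assoc Wᵀ, hWW,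
      Matrix.one_mul, hVV]
  · calc (Aᵀ * (W * Vᵀ)).trace = ((A * V)ᵀ * W).trace := by
          rw [transpose_mul, ← Matrix.mul_assoc, trace_mul_cycle, Matrix.mul_assoc]
      _ = nuclearNorm A := by
          rw [hAV, transpose_mul, Matrix.mul_assoc, hWW, Matrix.mul_one, diagonal_transpose,
            trace_diagonal, nuclearNorm]

end SVD

section Frobenius

variable {m n : Type*} [Fintype m] [Fintype n]

theorem trace_transpose_mul_eq_sum (A B : Matrix m n ℝ) :
    (Aᵀ * B).trace = ∑ i, ∑ j, A i j * B i j := by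
  simp only [trace, diag, mul_apply, transpose_apply]
  exact Finset.sum_comm

theorem frobSq_eq_trace (A : Matrix m n ℝ) : frobSq A = (Aᵀ * A).trace := by
  simp only [trace_transpose_mul_eq_sum, frobSq, sq]

theorem frobSq_nonneg (A : Matrix m n ℝ) : 0 ≤ frobSq A := by
  unfold frobSq; positivity

theorem frobSq_ne_zero {A : Matrix m n ℝ} (hA : A ≠ 0) : frobSq A ≠ 0 := by
  rwa [frobSq_eq_trace, ← conjTranspose_eq_transpose_of_trivial, Ne,
    trace_conjTranspose_mul_self_eq_zero_iff]

theorem trace_transpose_mul_le (A B : Matrix m n ℝ) :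
    (Aᵀ * B).trace ≤ √(frobSq A) * √(frobSq B) := by
  simpa only [trace_transpose_mul_eq_sum, frobSq, ← Fintype.sum_prod_type'] using
    Real.sum_mul_le_sqrt_mul_sqrt Finset.univ (fun p : m × n ↦ A p.1 p.2) fun p ↦ B p.1 p.2

theorem frobSq_add (A B : Matrix m n ℝ) :
    frobSq (A + B) = frobSq A + frobSq B + 2 * (Aᵀ * B).trace := by
  simp only [frobSq_eq_trace, transpose_add, Matrix.add_mul, Matrix.mul_add, trace_add]
  rw [← trace_transpose (Bᵀ * A), transpose_mul, transpose_transpose]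
  ring

theorem frobSq_sub (A B : Matrix m n ℝ) :
    frobSq (A - B) = frobSq A + frobSq B - 2 * (Aᵀ * B).trace := by
  simp only [frobSq_eq_trace, transpose_sub, Matrix.sub_mul, Matrix.mul_sub, trace_sub]
  rw [← trace_transpose (Bᵀ * A), transpose_mul, transpose_transpose]
  ring

theorem frobSq_mul_of_transpose_mul_self_eq_one [DecidableEq m] {U : Matrix m m ℝ}
    (hU : Uᵀ * U = 1) (A : Matrix m n ℝ) : frobSq (U * A) = frobSq A := by
  rw [frobSq_eq_trace, frobSq_eq_trace, transpose_mul, Matrix.mul_assoc, ← Matrix.mul_assoc Uᵀ,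
    hU, Matrix.one_mul]

theorem trace_mul_sub_mul_transpose_mul_le [DecidableEq m] (S Q : Matrix m n ℝ)
    {U : Matrix m m ℝ} (hU : Uᵀ * U = 1) :
    ((S * Sᵀ - Q * Qᵀ) * U).trace ≤ √(frobSq (S + Q)) * √(frobSq (S - Q)) := by
  have hsymm : 2 • (S * Sᵀ - Q * Qᵀ) = (S + Q) * (S - Q)ᵀ + (S - Q) * (S + Q)ᵀ := by
    simp only [transpose_add, transpose_sub, Matrix.add_mul, Matrix.sub_mul, Matrix.mul_add,
      Matrix.mul_sub, two_smul]
    abel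
  have h₁ : ((S + Q) * (S - Q)ᵀ * U).trace ≤ √(frobSq (S + Q)) * √(frobSq (S - Q)) := by
    rw [Matrix.mul_assoc, trace_mul_comm, Matrix.mul_assoc,
      ← frobSq_mul_of_transpose_mul_self_eq_one hU (S + Q), mul_comm]
    exact trace_transpose_mul_le _ _
  have h₂ : ((S - Q) * (S + Q)ᵀ * U).trace ≤ √(frobSq (S + Q)) * √(frobSq (S - Q)) := by
    rw [Matrix.mul_assoc, trace_mul_comm, Matrix.mul_assoc,
      ← frobSq_mul_of_transpose_mul_self_eq_one hU (S - Q)]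
    exact trace_transpose_mul_le _ _
  have h : 2 * ((S * Sᵀ - Q * Qᵀ) * U).trace =
      ((S + Q) * (S - Q)ᵀ * U).trace + ((S - Q) * (S + Q)ᵀ * U).trace := by
    rw [← trace_add, ← Matrix.add_mul, ← hsymm, Matrix.smul_mul, trace_smul, nsmul_eq_mul,
      Nat.cast_ofNat]
  linarith

end Frobenius

section Fidelity

variable {M : ℕ} {KX KY : Matrix (Fin M) (Fin M) ℝ}

theorem fidelity_eq_nuclearNorm (hX : KX.PosSemidef) (hY : KY.PosSemidef) :
    fidelity hX hY = nuclearNorm (hY.sqrt * hX.sqrt) := by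
  refine (nuclearNorm_eq_trace_sqrt _ ?_).symm
  rw [conjTranspose_eq_transpose_of_trivial, transpose_mul, hX.transpose_sqrt,
    hY.transpose_sqrt, Matrix.mul_assoc, ← Matrix.mul_assoc hY.sqrt, hY.sqrt_mul_self,
    Matrix.mul_assoc]

theorem exists_mul_transpose_eq_trace_eq_fidelity (hX : KX.PosSemidef) (hY : KY.PosSemidef) :
    ∃ Q : Matrix (Fin M) (Fin M) ℝ, Q * Qᵀ = KY ∧ (hX.sqrt * Q).trace = fidelity hX hY := by
  obtain ⟨U, hU, hUF⟩ := exists_trace_transpose_mul_eq_nuclearNorm (hY.sqrt * hX.sqrt)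
  refine ⟨hY.sqrt * U, ?_, ?_⟩
  · rw [transpose_mul, hY.transpose_sqrt, Matrix.mul_assoc, ← Matrix.mul_assoc U,
      mul_eq_one_comm.mp hU, Matrix.one_mul, hY.sqrt_mul_self]
  · rw [fidelity_eq_nuclearNorm, ← hUF, transpose_mul, hX.transpose_sqrt, hY.transpose_sqrt,
      Matrix.mul_assoc]

theorem two_mul_fidelity_le (hX : KX.PosSemidef) (hY : KY.PosSemidef) :
    2 * fidelity hX hY ≤ √((KX.trace + KY.trace) ^ 2 - nuclearNorm (KX - KY) ^ 2) := by
  set S := hX.sqrt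
  set F := fidelity hX hY
  obtain ⟨Q, hQ, hSQ⟩ := exists_mul_transpose_eq_trace_eq_fidelity hX hY
  have hS : S * Sᵀ = KX := by rw [hX.transpose_sqrt, hX.sqrt_mul_self]
  have htrace (A : Matrix (Fin M) (Fin M) ℝ) : frobSq A = (A * Aᵀ).trace := by
    rw [frobSq_eq_trace, trace_mul_comm]
  have hplus : frobSq (S + Q) = KX.trace + KY.trace + 2 * F := by
    rw [frobSq_add, htrace S, htrace Q, hS, hQ, hX.transpose_sqrt, hSQ]
  have hminus : frobSq (S - Q) = KX.trace + KY.trace - 2 * F := by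
    rw [frobSq_sub, htrace S, htrace Q, hS, hQ, hX.transpose_sqrt, hSQ]
  obtain ⟨U, hU, hUN⟩ := exists_trace_transpose_mul_eq_nuclearNorm (KX - KY)
  have hN : nuclearNorm (KX - KY) ≤ √(frobSq (S + Q)) * √(frobSq (S - Q)) := by
    rw [← hUN, ← hS, ← hQ, transpose_sub, transpose_mul, transpose_mul, transpose_transpose,
      transpose_transpose]
    exact trace_mul_sub_mul_transpose_mul_le S Q hU
  have hN2 := pow_le_pow_left₀ (nuclearNorm_nonneg _) hN 2
  rw [mul_pow, Real.sq_sqrt (frobSq_nonneg _), Real.sq_sqrt (frobSq_nonneg _), hplus,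
    hminus] at hN2
  apply Real.le_sqrt_of_sq_le
  linarith

end Fidelity

/-- For real symmetric positive semidefinite `M × M` matrices `K_X ≠ K_Y`
with `α = Tr K_X`, `β = Tr K_Y` and participation ratio
`R_Δ = ‖K_X − K_Y‖_*²/‖K_X − K_Y‖_F²`, the squared Bures distance
`d_B² = Tr K_X + Tr K_Y − 2 F(K_X, K_Y)` satisfies
`d_B² ≥ (α + β) − √((α + β)² − R_Δ ‖K_X − K_Y‖_F²)`. -/
theorem bures_distance_sq_lower_bound
    {M : ℕ} (KX KY : Matrix (Fin M) (Fin M) ℝ)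
    (hX : KX.PosSemidef) (hY : KY.PosSemidef) (hne : KX ≠ KY)
    (α β RΔ : ℝ) (hα : α = KX.trace) (hβ : β = KY.trace)
    (hRΔ : RΔ = nuclearNorm (KX - KY) ^ 2 / frobSq (KX - KY)) :
    (α + β) - Real.sqrt ((α + β) ^ 2 - RΔ * frobSq (KX - KY)) ≤
      KX.trace + KY.trace - 2 * fidelity hX hY := by
  subst hα hβ hRΔ
  rw [div_mul_cancel₀ _ (frobSq_ne_zero (sub_ne_zero_of_ne hne))]
  linarith [two_mul_fidelity_le hX hY]
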